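/- arXiv:2404.11239 — 4 statements merged into one kernel-verified Lean document; each statement's English description precedes it below -/
import Mathlib

section
/- Let K > 0 be real, r ≥ 2 an integer, and T ∈ ℕ. Let (p_t)_{t≥0} be a neutral-position frequency chain with deterministic initial value p_0 ∈ [0,1], i.e., a sequence of [0,1]-valued random variables adapted to a filtration (F_t) such that, conditionally on F_t, p_{t+1} = p_t + 1/K with probability p_t(1 - p_t), p_{t+1} = p_t - 1/K with probability p_t(1 - p_t), and p_{t+1} = p_t with the remaining probability. Then P[ max_{t ∈ {0,…,T}} | p_t - p_0 | ≥ 1/(2r) ] ≤ 2 exp( - K² / (8 T r²) ). -/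
open MeasureTheory
open scoped ENNReal NNReal

lemma neutral_chain_onesided
    {Ω : Type*} {m0 : MeasurableSpace Ω} (μ : Measure Ω) [IsProbabilityMeasure μ]
    (ℱ : Filtration ℕ m0) (K : ℝ) (hK : 0 < K) (T : ℕ)
    (p : ℕ → Ω → ℝ) (c : ℝ) (hc : c ∈ Set.Icc (0 : ℝ) 1) (h0 : p 0 = fun _ => c)
    (hadapted : Adapted ℱ p)
    (hmem : ∀ t, ∀ᵐ ω ∂μ, p t ω ∈ Set.Icc (0 : ℝ) 1)
    (hcases : ∀ t, ∀ᵐ ω ∂μ,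
      p (t + 1) ω = p t ω + 1 / K ∨ p (t + 1) ω = p t ω - 1 / K ∨ p (t + 1) ω = p t ω)
    (hup : ∀ t,
      μ[({ω | p (t + 1) ω = p t ω + 1 / K}).indicator (fun _ => (1 : ℝ)) | ℱ t]
        =ᵐ[μ] fun ω => p t ω * (1 - p t ω))
    (hdown : ∀ t,
      μ[({ω | p (t + 1) ω = p t ω - 1 / K}).indicator (fun _ => (1 : ℝ)) | ℱ t]
        =ᵐ[μ] fun ω => p t ω * (1 - p t ω))
    (hstay : ∀ t,
      μ[({ω | p (t + 1) ω = p t ω}).indicator (fun _ => (1 : ℝ)) | ℱ t]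
        =ᵐ[μ] fun ω => 1 - 2 * (p t ω * (1 - p t ω)))
    (L b : ℝ) :
    μ {ω | ∃ t ∈ Finset.range (T + 1), Real.exp b ≤ Real.exp (L * (p t ω - c))}
      ≤ ENNReal.ofReal (Real.exp (L ^ 2 * T / (2 * K ^ 2) - b)) := by
  -- the exponential process
  set g : ℕ → Ω → ℝ := fun t ω => Real.exp (L * (p t ω - c)) with hg_def
  have hg_meas : ∀ t, StronglyMeasurable[ℱ t] (g t) := fun t =>
    (Real.continuous_exp.comp_stronglyMeasurable
      (((hadapted t).stronglyMeasurable.sub stronglyMeasurable_const).const_mul L))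
  have hg_meas0 : ∀ t, StronglyMeasurable (g t) := fun t => (hg_meas t).mono (ℱ.le t)
  have hg_nonneg : ∀ t ω, 0 ≤ g t ω := fun t ω => (Real.exp_pos _).le
  have hg_bound : ∀ t, ∀ᵐ ω ∂μ, ‖g t ω‖ ≤ Real.exp |L| := by
    intro t
    filter_upwards [hmem t] with ω hω
    rw [Real.norm_eq_abs, abs_of_nonneg (hg_nonneg t ω)]
    apply Real.exp_le_exp.2
    calc L * (p t ω - c) ≤ |L * (p t ω - c)| := le_abs_self _
      _ = |L| * |p t ω - c| := abs_mul _ _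
      _ ≤ |L| * 1 := by
          refine mul_le_mul_of_nonneg_left ?_ (abs_nonneg _)
          rw [abs_le]
          constructor <;> [linarith [hω.1, hc.2]; linarith [hω.2, hc.1]]
      _ = |L| := mul_one _
  have hg_int : ∀ t, Integrable (g t) μ := fun t =>
    (integrable_const (Real.exp |L|)).mono' (hg_meas0 t).aestronglyMeasurable (hg_bound t)
  -- one-step conditional expectation
  have hstep : ∀ t, μ[g (t + 1) | ℱ t] =ᵐ[μ] fun ω =>
      g t ω * (1 + (p t ω * (1 - p t ω)) * (Real.exp (L / K) + Real.exp (-(L / K)) - 2)) := by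
    intro t
    set A : Set Ω := {ω | p (t + 1) ω = p t ω + 1 / K} with hA_def
    set B : Set Ω := {ω | p (t + 1) ω = p t ω - 1 / K} with hB_def
    set C : Set Ω := {ω | p (t + 1) ω = p t ω} with hC_def
    have hpm : ∀ s, Measurable (p s) := fun s => (hadapted s).mono (ℱ.le s) le_rfl
    have hA : MeasurableSet A := measurableSet_eq_fun (hpm _) ((hpm t).add_const _)
    have hB : MeasurableSet B := measurableSet_eq_fun (hpm _) ((hpm t).sub_const _)
    have hC : MeasurableSet C := measurableSet_eq_fun (hpm _) (hpm t)
    have hKne : (1 : ℝ) / K ≠ 0 := by positivity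
    -- decomposition of g (t+1)
    set F : Ω → ℝ := fun ω =>
      (Real.exp (L / K) * g t ω) * A.indicator (fun _ => (1 : ℝ)) ω
      + ((Real.exp (-(L / K)) * g t ω) * B.indicator (fun _ => (1 : ℝ)) ω
      + (g t ω) * C.indicator (fun _ => (1 : ℝ)) ω) with hF_def
    have hdecomp : g (t + 1) =ᵐ[μ] F := by
      filter_upwards [hcases t] with ω hω
      rcases hω with hω | hω | hω
      · have hωA : ω ∈ A := hω
        have hωB : ω ∉ B := fun h => by
          have : p t ω + 1 / K = p t ω - 1 / K := hω ▸ h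
          have : (1 : ℝ) / K = 0 := by linarith
          exact hKne this
        have hωC : ω ∉ C := fun h => by
          have : p t ω + 1 / K = p t ω := hω ▸ h
          exact hKne (by linarith)
        simp only [hF_def, Set.indicator_of_mem hωA, Set.indicator_of_notMem hωB,
          Set.indicator_of_notMem hωC, mul_one, mul_zero, add_zero]
        simp only [hg_def, hω, ← Real.exp_add]
        congr 1
        field_simp
        ring
      · have hωB : ω ∈ B := hω
        have hωA : ω ∉ A := fun h => by
          have : p t ω + 1 / K = p t ω - 1 / K := by rw [← h, ← hω]
          have : (1 : ℝ) / K = 0 := by linarith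
          exact hKne this
        have hωC : ω ∉ C := fun h => by
          have : p t ω - 1 / K = p t ω := hω ▸ h
          exact hKne (by linarith)
        simp only [hF_def, Set.indicator_of_mem hωB, Set.indicator_of_notMem hωA,
          Set.indicator_of_notMem hωC, mul_one, mul_zero, add_zero, zero_add]
        simp only [hg_def, hω, ← Real.exp_add]
        congr 1
        field_simp
        ring
      · have hωC : ω ∈ C := hω
        have hωA : ω ∉ A := fun h => by
          have h' : p (t + 1) ω = p t ω + 1 / K := h
          rw [hω] at h'
          exact hKne (by linarith)
        have hωB : ω ∉ B := fun h => by
          have h' : p (t + 1) ω = p t ω - 1 / K := h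
          rw [hω] at h'
          exact hKne (by linarith)
        simp only [hF_def, Set.indicator_of_mem hωC, Set.indicator_of_notMem hωA,
          Set.indicator_of_notMem hωB, mul_one, mul_zero, add_zero, zero_add]
        simp only [hg_def, hω]
    -- conditional expectation of the decomposition
    have hind_int : ∀ (S : Set Ω), MeasurableSet S →
        Integrable (S.indicator (fun _ => (1 : ℝ))) μ :=
      fun S hS => (integrable_const (1 : ℝ)).indicator hS
    have hprod_int : ∀ (S : Set Ω), MeasurableSet S → ∀ d : ℝ,
        Integrable ((fun ω => d * g t ω) * S.indicator (fun _ => (1 : ℝ))) μ := by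
      intro S hS d
      refine (integrable_const (|d| * Real.exp |L|)).mono'
        ((((hg_meas0 t).const_mul d).mul
          (stronglyMeasurable_const.indicator hS)).aestronglyMeasurable) ?_
      filter_upwards [hg_bound t] with ω hω
      have hi : |S.indicator (fun _ => (1 : ℝ)) ω| ≤ 1 := by
        by_cases h : ω ∈ S <;>
          simp [Set.indicator_of_mem, Set.indicator_of_notMem, h]
      have hgb : |g t ω| ≤ Real.exp |L| := by rwa [Real.norm_eq_abs] at hω
      simp only [Pi.mul_apply, Real.norm_eq_abs, abs_mul]
      calc |d| * |g t ω| * |S.indicator (fun _ => (1 : ℝ)) ω|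
          ≤ |d| * Real.exp |L| * 1 := by
            apply mul_le_mul (mul_le_mul_of_nonneg_left hgb (abs_nonneg d)) hi
              (abs_nonneg _) (by positivity)
        _ = |d| * Real.exp |L| := mul_one _
    have h1 := condExp_mul_of_stronglyMeasurable_left (μ := μ) ((hg_meas t).const_mul (Real.exp (L / K)))
      (hprod_int A hA _) (hind_int A hA)
    have h2 := condExp_mul_of_stronglyMeasurable_left (μ := μ) ((hg_meas t).const_mul (Real.exp (-(L / K))))
      (hprod_int B hB _) (hind_int B hB)
    have h3 := condExp_mul_of_stronglyMeasurable_left (μ := μ) ((hg_meas t).const_mul (1 : ℝ))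
      (hprod_int C hC _) (hind_int C hC)
    have e1 := condExp_add (μ := μ) (m := ℱ t) (hprod_int A hA (Real.exp (L / K)))
      ((hprod_int B hB (Real.exp (-(L / K)))).add (hprod_int C hC 1))
    have e2 := condExp_add (μ := μ) (m := ℱ t) (hprod_int B hB (Real.exp (-(L / K))))
      (hprod_int C hC 1)
    have hcg : μ[g (t + 1) | ℱ t] =ᵐ[μ] μ[F | ℱ t] := condExp_congr_ae hdecomp
    have hFeq : F = (fun ω => Real.exp (L / K) * g t ω) * A.indicator (fun _ => (1 : ℝ))
        + ((fun ω => Real.exp (-(L / K)) * g t ω) * B.indicator (fun _ => (1 : ℝ))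
        + (fun ω => (1 : ℝ) * g t ω) * C.indicator (fun _ => (1 : ℝ))) := by
      funext ω
      simp only [hF_def, Pi.add_apply, Pi.mul_apply, one_mul]
    rw [hFeq] at hcg
    filter_upwards [hcg, e1, e2, h1, h2, h3, hup t, hdown t, hstay t]
      with ω h_cg h_e1 h_e2 h_h1 h_h2 h_h3 h_u h_d h_s
    rw [h_cg, h_e1]
    simp only [Pi.add_apply] at h_e2 ⊢
    rw [h_e2, h_h1, h_h2, h_h3]
    simp only [Pi.mul_apply]
    rw [h_u, h_d, h_s]
    ring
  -- submartingale property
  have hsub : Submartingale g ℱ μ := by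
    refine submartingale_nat (fun t => hg_meas t) hg_int fun t => ?_
    filter_upwards [hstep t, hmem t] with ω hω hωm
    rw [hω]
    have hq : 0 ≤ p t ω * (1 - p t ω) := mul_nonneg hωm.1 (by linarith [hωm.2])
    have hd : 0 ≤ Real.exp (L / K) + Real.exp (-(L / K)) - 2 := by
      have h1 := Real.add_one_le_exp (L / K)
      have h2 := Real.add_one_le_exp (-(L / K))
      linarith
    nlinarith [mul_nonneg (hg_nonneg t ω) (mul_nonneg hq hd)]
  -- expectation bound by induction
  set C0 : ℝ := (Real.exp (L / K) + Real.exp (-(L / K))) / 2 with hC0_def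
  have hC0_nonneg : 0 ≤ C0 := by positivity
  have hExp : ∀ t, ∫ ω, g t ω ∂μ ≤ C0 ^ t := by
    intro t
    induction t with
    | zero =>
      simp only [pow_zero, hg_def, h0, sub_self, mul_zero, Real.exp_zero]
      simp [measure_univ]
    | succ t ih =>
      have hae : (μ[g (t + 1) | ℱ t]) ≤ᵐ[μ] fun ω => g t ω * C0 := by
        filter_upwards [hstep t, hmem t] with ω hω hωm
        rw [hω]
        have hd : 0 ≤ Real.exp (L / K) + Real.exp (-(L / K)) - 2 := by
          have h1 := Real.add_one_le_exp (L / K)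
          have h2 := Real.add_one_le_exp (-(L / K))
          linarith
        have hq4 : p t ω * (1 - p t ω) ≤ 1 / 4 := by nlinarith [sq_nonneg (p t ω - 1 / 2)]
        have hq : 0 ≤ p t ω * (1 - p t ω) := mul_nonneg hωm.1 (by linarith [hωm.2])
        have hin : 1 + (p t ω * (1 - p t ω)) * (Real.exp (L / K) + Real.exp (-(L / K)) - 2)
            ≤ C0 := by
          rw [hC0_def]
          nlinarith [mul_le_mul_of_nonneg_right hq4 hd]
        exact mul_le_mul_of_nonneg_left hin (hg_nonneg t ω)
      calc ∫ ω, g (t + 1) ω ∂μ = ∫ ω, (μ[g (t + 1) | ℱ t]) ω ∂μ :=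
            (integral_condExp (ℱ.le t)).symm
        _ ≤ ∫ ω, g t ω * C0 ∂μ :=
            integral_mono_ae integrable_condExp ((hg_int t).mul_const C0) hae
        _ = (∫ ω, g t ω ∂μ) * C0 := integral_mul_const _ _
        _ ≤ C0 ^ t * C0 := mul_le_mul_of_nonneg_right ih hC0_nonneg
        _ = C0 ^ (t + 1) := (pow_succ C0 t).symm
  have hET : ∫ ω, g T ω ∂μ ≤ Real.exp (L ^ 2 * T / (2 * K ^ 2)) := by
    have hcosh : C0 = Real.cosh (L / K) := by rw [Real.cosh_eq]
    have h1 : C0 ^ T ≤ Real.exp ((L / K) ^ 2 / 2) ^ T := by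
      apply pow_le_pow_left₀ hC0_nonneg
      rw [hcosh]
      exact Real.cosh_le_exp_half_sq _
    have h2 : Real.exp ((L / K) ^ 2 / 2) ^ T = Real.exp (L ^ 2 * T / (2 * K ^ 2)) := by
      rw [← Real.exp_nat_mul]
      congr 1
      field_simp
    exact (hExp T).trans (h1.trans_eq h2)
  -- Doob's maximal inequality
  set ε : ℝ≥0 := (Real.exp b).toNNReal with hε_def
  have hεe : ((ε : ℝ≥0) : ℝ) = Real.exp b := Real.coe_toNNReal _ (Real.exp_pos b).le
  have hε0 : (ε : ℝ≥0∞) ≠ 0 := by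
    simp only [ne_eq, ENNReal.coe_eq_zero, hε_def, Real.toNNReal_eq_zero, not_le]
    exact Real.exp_pos b
  have hmax := maximal_ineq hsub (fun t ω => hg_nonneg t ω) (ε := ε) T
  set S : Set Ω := {ω | (ε : ℝ) ≤
    (Finset.range (T + 1)).sup' Finset.nonempty_range_add_one fun k => g k ω} with hS_def
  have hsubset : {ω | ∃ t ∈ Finset.range (T + 1), Real.exp b ≤ Real.exp (L * (p t ω - c))}
      ⊆ S := by
    intro ω hω
    obtain ⟨t, ht, hle⟩ := hω
    show (ε : ℝ) ≤ _
    rw [hεe]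
    exact le_trans hle (Finset.le_sup' (fun k => g k ω) ht)
  have hSmeas : ∫ ω in S, g T ω ∂μ ≤ Real.exp (L ^ 2 * T / (2 * K ^ 2)) := by
    refine le_trans (setIntegral_le_integral (hg_int T) ?_) hET
    filter_upwards with ω using hg_nonneg T ω
  have hmul : (ε : ℝ≥0∞) * μ S ≤ ENNReal.ofReal (Real.exp (L ^ 2 * T / (2 * K ^ 2))) := by
    refine le_trans ?_ (ENNReal.ofReal_le_ofReal hSmeas)
    simpa [ENNReal.smul_def, smul_eq_mul] using hmax
  calc μ {ω | ∃ t ∈ Finset.range (T + 1), Real.exp b ≤ Real.exp (L * (p t ω - c))}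
      ≤ μ S := measure_mono hsubset
    _ ≤ (ε : ℝ≥0∞)⁻¹ * ((ε : ℝ≥0∞) * μ S) := by
        rw [← mul_assoc, ENNReal.inv_mul_cancel hε0 ENNReal.coe_ne_top, one_mul]
    _ ≤ (ε : ℝ≥0∞)⁻¹ * ENNReal.ofReal (Real.exp (L ^ 2 * T / (2 * K ^ 2))) :=
        mul_le_mul_right hmul _
    _ = ENNReal.ofReal (Real.exp (-b)) * ENNReal.ofReal (Real.exp (L ^ 2 * T / (2 * K ^ 2))) := by
        congr 1
        rw [Real.exp_neg, ENNReal.ofReal_inv_of_pos (Real.exp_pos b)]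
        rfl
    _ = ENNReal.ofReal (Real.exp (L ^ 2 * T / (2 * K ^ 2) - b)) := by
        rw [← ENNReal.ofReal_mul (Real.exp_nonneg _), ← Real.exp_add]
        congr 1
        ring


/-- For a neutral-position frequency chain of the `r`-cGA with parameter
`K > 0` and deterministic initial value `p_0 = c`, the probability that within `T` steps
some frequency deviates from the initial value by at least `1/(2r)` is at most
`2 exp(-K² / (8 T r²))`. -/
theorem neutral_chain_concentration
    {Ω : Type*} {m0 : MeasurableSpace Ω} (μ : Measure Ω) [IsProbabilityMeasure μ]
    (ℱ : Filtration ℕ m0) (K : ℝ) (hK : 0 < K) (r : ℕ) (hr : 2 ≤ r) (T : ℕ)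
    (p : ℕ → Ω → ℝ) (c : ℝ) (hc : c ∈ Set.Icc (0 : ℝ) 1) (h0 : p 0 = fun _ => c)
    (hadapted : Adapted ℱ p)
    (hmem : ∀ t, ∀ᵐ ω ∂μ, p t ω ∈ Set.Icc (0 : ℝ) 1)
    (hcases : ∀ t, ∀ᵐ ω ∂μ,
      p (t + 1) ω = p t ω + 1 / K ∨ p (t + 1) ω = p t ω - 1 / K ∨ p (t + 1) ω = p t ω)
    (hup : ∀ t,
      μ[({ω | p (t + 1) ω = p t ω + 1 / K}).indicator (fun _ => (1 : ℝ)) | ℱ t]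
        =ᵐ[μ] fun ω => p t ω * (1 - p t ω))
    (hdown : ∀ t,
      μ[({ω | p (t + 1) ω = p t ω - 1 / K}).indicator (fun _ => (1 : ℝ)) | ℱ t]
        =ᵐ[μ] fun ω => p t ω * (1 - p t ω))
    (hstay : ∀ t,
      μ[({ω | p (t + 1) ω = p t ω}).indicator (fun _ => (1 : ℝ)) | ℱ t]
        =ᵐ[μ] fun ω => 1 - 2 * (p t ω * (1 - p t ω))) :
    μ {ω | ∃ t ∈ Finset.range (T + 1), 1 / (2 * (r : ℝ)) ≤ |p t ω - c|}
      ≤ ENNReal.ofReal (2 * Real.exp (-K ^ 2 / (8 * T * (r : ℝ) ^ 2))) := by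
  rcases Nat.eq_zero_or_pos T with hT | hT
  · subst hT
    have h2 : (1 : ℝ≥0∞) ≤ ENNReal.ofReal (2 * Real.exp (-K ^ 2 / (8 * (0 : ℕ) * (r : ℝ) ^ 2))) := by
      rw [ENNReal.one_le_ofReal]
      norm_num
    exact le_trans prob_le_one h2
  · have hr0 : (0 : ℝ) < r := by
      have : 0 < r := lt_of_lt_of_le (by norm_num) hr
      exact_mod_cast this
    have hT0 : (0 : ℝ) < T := by exact_mod_cast hT
    set a : ℝ := 1 / (2 * (r : ℝ)) with ha_def
    have ha : 0 < a := by positivity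
    set L : ℝ := a * K ^ 2 / T with hL_def
    have hL : 0 < L := by positivity
    set b : ℝ := L * a with hb_def
    have hplus := neutral_chain_onesided μ ℱ K hK T p c hc h0 hadapted hmem hcases
      hup hdown hstay L b
    have hminus := neutral_chain_onesided μ ℱ K hK T p c hc h0 hadapted hmem hcases
      hup hdown hstay (-L) b
    have hsubset : {ω | ∃ t ∈ Finset.range (T + 1), a ≤ |p t ω - c|} ⊆
        {ω | ∃ t ∈ Finset.range (T + 1), Real.exp b ≤ Real.exp (L * (p t ω - c))} ∪
        {ω | ∃ t ∈ Finset.range (T + 1), Real.exp b ≤ Real.exp ((-L) * (p t ω - c))} := by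
      intro ω hω
      obtain ⟨t, ht, habs⟩ := hω
      rcases le_abs.1 habs with h | h
      · left
        exact ⟨t, ht, Real.exp_le_exp.2 (by rw [hb_def]; nlinarith)⟩
      · right
        exact ⟨t, ht, Real.exp_le_exp.2 (by rw [hb_def]; nlinarith)⟩
    have hexp : L ^ 2 * (T : ℝ) / (2 * K ^ 2) - b = -K ^ 2 / (8 * (T : ℝ) * (r : ℝ) ^ 2) := by
      rw [hb_def, hL_def, ha_def]
      field_simp
      ring
    have hexp' : (-L) ^ 2 * (T : ℝ) / (2 * K ^ 2) - b = -K ^ 2 / (8 * (T : ℝ) * (r : ℝ) ^ 2) := by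
      rw [neg_pow, ← hexp]
      ring_nf
    calc μ {ω | ∃ t ∈ Finset.range (T + 1), a ≤ |p t ω - c|}
        ≤ μ ({ω | ∃ t ∈ Finset.range (T + 1), Real.exp b ≤ Real.exp (L * (p t ω - c))} ∪
            {ω | ∃ t ∈ Finset.range (T + 1), Real.exp b ≤ Real.exp ((-L) * (p t ω - c))}) :=
          measure_mono hsubset
      _ ≤ μ {ω | ∃ t ∈ Finset.range (T + 1), Real.exp b ≤ Real.exp (L * (p t ω - c))} +
          μ {ω | ∃ t ∈ Finset.range (T + 1), Real.exp b ≤ Real.exp ((-L) * (p t ω - c))} :=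
          measure_union_le _ _
      _ ≤ ENNReal.ofReal (Real.exp (L ^ 2 * T / (2 * K ^ 2) - b)) +
          ENNReal.ofReal (Real.exp ((-L) ^ 2 * T / (2 * K ^ 2) - b)) := add_le_add hplus hminus
      _ = ENNReal.ofReal (2 * Real.exp (-K ^ 2 / (8 * (T : ℝ) * (r : ℝ) ^ 2))) := by
          rw [hexp, hexp', ← ENNReal.ofReal_add (Real.exp_nonneg _) (Real.exp_nonneg _)]
          congr 1
          ring
end

section
/- Let K > 0 be real and let p, q ∈ [0,1] satisfy p = q + 1/K. Let X be a random variable taking value p + 1/K with probability p(1 - p), value p - 1/K with probability p(1 - p), and value p with the remaining probability 1 - 2p(1 - p); similarly let Y take value q + 1/K with probability q(1 - q), value q - 1/K with probability q(1 - q), and value q with probability 1 - 2q(1 - q). Then X stochastically dominates Y, i.e., for all λ ∈ ℝ, P[X ≤ λ] ≤ P[Y ≤ λ]. -/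
open MeasureTheory

/-- One frequency-update step of the `r`-cGA without margins started at
frequency `p = q + 1/K` stochastically dominates the step started at frequency `q`:
if `X` takes values `p + 1/K`, `p - 1/K`, `p` with probabilities `p(1-p)`, `p(1-p)`,
`1 - 2p(1-p)` and `Y` analogously for `q`, then `P[X ≤ λ] ≤ P[Y ≤ λ]` for all `λ`. -/
theorem one_step_stochastic_domination
    {Ω : Type*} [MeasurableSpace Ω] (μ : Measure Ω) [IsProbabilityMeasure μ]
    (K p q : ℝ) (hK : 0 < K)
    (hp : p ∈ Set.Icc (0 : ℝ) 1) (hq : q ∈ Set.Icc (0 : ℝ) 1) (hpq : p = q + 1 / K)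
    (X Y : Ω → ℝ) (hX : Measurable X) (hY : Measurable Y)
    (hX1 : μ {ω | X ω = p + 1 / K} = ENNReal.ofReal (p * (1 - p)))
    (hX2 : μ {ω | X ω = p - 1 / K} = ENNReal.ofReal (p * (1 - p)))
    (hX3 : μ {ω | X ω = p} = ENNReal.ofReal (1 - 2 * p * (1 - p)))
    (hY1 : μ {ω | Y ω = q + 1 / K} = ENNReal.ofReal (q * (1 - q)))
    (hY2 : μ {ω | Y ω = q - 1 / K} = ENNReal.ofReal (q * (1 - q)))
    (hY3 : μ {ω | Y ω = q} = ENNReal.ofReal (1 - 2 * q * (1 - q))) :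
    ∀ lam : ℝ, μ {ω | X ω ≤ lam} ≤ μ {ω | Y ω ≤ lam} := by
  intro lam
  obtain ⟨hp0, hp1⟩ := hp
  obtain ⟨hq0, hq1⟩ := hq
  have hK' : (0:ℝ) < 1/K := by positivity
  have hmp : 0 ≤ p * (1 - p) := mul_nonneg hp0 (by linarith)
  have hmq : 0 ≤ q * (1 - q) := mul_nonneg hq0 (by linarith)
  have hmp' : 0 ≤ 1 - 2 * p * (1 - p) := by nlinarith
  have hmq' : 0 ≤ 1 - 2 * q * (1 - q) := by nlinarith
  have hMX1 : MeasurableSet {ω | X ω = p + 1/K} := hX (measurableSet_singleton _)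
  have hMX2 : MeasurableSet {ω | X ω = p - 1/K} := hX (measurableSet_singleton _)
  have hMX3 : MeasurableSet {ω | X ω = p} := hX (measurableSet_singleton _)
  rcases lt_or_ge lam q with h1 | h1
  · -- lam < q : μ{X ≤ lam} = 0
    have hd23 : Disjoint {ω | X ω = p - 1/K} {ω | X ω = p} := by
      rw [Set.disjoint_left]; intro ω ha hb
      simp only [Set.mem_setOf_eq] at ha hb; rw [ha] at hb; linarith
    have hd231 : Disjoint ({ω | X ω = p - 1/K} ∪ {ω | X ω = p}) {ω | X ω = p + 1/K} := by
      rw [Set.disjoint_left]; intro ω ha hb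
      simp only [Set.mem_union, Set.mem_setOf_eq] at ha hb
      rcases ha with ha | ha <;> rw [ha] at hb <;> linarith
    have hdA : Disjoint {ω | X ω ≤ lam}
        (({ω | X ω = p - 1/K} ∪ {ω | X ω = p}) ∪ {ω | X ω = p + 1/K}) := by
      rw [Set.disjoint_left]; intro ω ha hb
      simp only [Set.mem_union, Set.mem_setOf_eq] at ha hb
      rcases hb with (hb | hb) | hb <;> rw [hb] at ha <;> linarith
    have hS : μ (({ω | X ω = p - 1/K} ∪ {ω | X ω = p}) ∪ {ω | X ω = p + 1/K}) = 1 := by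
      rw [measure_union hd231 hMX1, measure_union hd23 hMX3, hX1, hX2, hX3,
        ← ENNReal.ofReal_add hmp hmp', ← ENNReal.ofReal_add (by linarith) hmp,
        show p * (1 - p) + (1 - 2 * p * (1 - p)) + p * (1 - p) = (1:ℝ) from by ring,
        ENNReal.ofReal_one]
    have key : μ {ω | X ω ≤ lam} + 1 ≤ 1 := by
      calc μ {ω | X ω ≤ lam} + 1
          = μ ({ω | X ω ≤ lam} ∪
              (({ω | X ω = p - 1/K} ∪ {ω | X ω = p}) ∪ {ω | X ω = p + 1/K})) := by
            rw [measure_union hdA ((hMX2.union hMX3).union hMX1), hS]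
        _ ≤ 1 := prob_le_one
    have h0 : μ {ω | X ω ≤ lam} ≤ 0 := by
      have key' : μ {ω | X ω ≤ lam} + 1 ≤ 0 + 1 := by rw [zero_add]; exact key
      exact (ENNReal.add_le_add_iff_right ENNReal.one_ne_top).mp key'
    exact le_trans h0 (zero_le (a := μ {ω | Y ω ≤ lam}))
  rcases lt_or_ge lam (q + 1/K) with h2 | h2
  · -- q ≤ lam < q + 1/K = p
    have hub : μ {ω | X ω ≤ lam} ≤ ENNReal.ofReal (p * (1 - p)) := by
      have hd31 : Disjoint {ω | X ω = p} {ω | X ω = p + 1/K} := by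
        rw [Set.disjoint_left]; intro ω ha hb
        simp only [Set.mem_setOf_eq] at ha hb; rw [ha] at hb; linarith
      have hdA : Disjoint {ω | X ω ≤ lam} ({ω | X ω = p} ∪ {ω | X ω = p + 1/K}) := by
        rw [Set.disjoint_left]; intro ω ha hb
        simp only [Set.mem_union, Set.mem_setOf_eq] at ha hb
        rcases hb with hb | hb <;> rw [hb] at ha <;> linarith
      have hsum : μ {ω | X ω ≤ lam} + ENNReal.ofReal (1 - p * (1 - p)) ≤ 1 := by
        have : μ ({ω | X ω = p} ∪ {ω | X ω = p + 1/K}) =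
            ENNReal.ofReal (1 - p * (1 - p)) := by
          rw [measure_union hd31 hMX1, hX1, hX3, ← ENNReal.ofReal_add hmp' hmp]
          congr 1; ring
        calc μ {ω | X ω ≤ lam} + ENNReal.ofReal (1 - p * (1 - p))
            = μ ({ω | X ω ≤ lam} ∪ ({ω | X ω = p} ∪ {ω | X ω = p + 1/K})) := by
              rw [measure_union hdA (hMX3.union hMX1), this]
          _ ≤ 1 := prob_le_one
      have h1eq : (1 : ENNReal) = ENNReal.ofReal (p * (1-p)) + ENNReal.ofReal (1 - p * (1-p)) := by
        rw [← ENNReal.ofReal_add hmp (by nlinarith),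
          show p * (1-p) + (1 - p * (1-p)) = (1:ℝ) from by ring, ENNReal.ofReal_one]
      rw [h1eq] at hsum
      exact (ENNReal.add_le_add_iff_right ENNReal.ofReal_ne_top).mp hsum
    have hlb : ENNReal.ofReal (1 - q * (1 - q)) ≤ μ {ω | Y ω ≤ lam} := by
      have hd : Disjoint {ω | Y ω = q - 1/K} {ω | Y ω = q} := by
        rw [Set.disjoint_left]; intro ω ha hb
        simp only [Set.mem_setOf_eq] at ha hb; rw [ha] at hb; linarith
      have hsub : ({ω | Y ω = q - 1/K} ∪ {ω | Y ω = q}) ⊆ {ω | Y ω ≤ lam} := by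
        intro ω hω
        simp only [Set.mem_union, Set.mem_setOf_eq] at hω ⊢
        rcases hω with hω | hω <;> rw [hω] <;> linarith
      calc ENNReal.ofReal (1 - q * (1 - q))
          = μ ({ω | Y ω = q - 1/K} ∪ {ω | Y ω = q}) := by
            rw [measure_union hd (hY (measurableSet_singleton _)), hY2, hY3,
              ← ENNReal.ofReal_add hmq hmq']
            congr 1; ring
        _ ≤ μ {ω | Y ω ≤ lam} := measure_mono hsub
    refine le_trans hub (le_trans ?_ hlb)
    exact ENNReal.ofReal_le_ofReal (by nlinarith [sq_nonneg (1 - 2*p), sq_nonneg (1 - 2*q)])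
  · -- lam ≥ q + 1/K : μ{Y ≤ lam} = 1
    have hd23 : Disjoint {ω | Y ω = q - 1/K} {ω | Y ω = q} := by
      rw [Set.disjoint_left]; intro ω ha hb
      simp only [Set.mem_setOf_eq] at ha hb; rw [ha] at hb; linarith
    have hd231 : Disjoint ({ω | Y ω = q - 1/K} ∪ {ω | Y ω = q}) {ω | Y ω = q + 1/K} := by
      rw [Set.disjoint_left]; intro ω ha hb
      simp only [Set.mem_union, Set.mem_setOf_eq] at ha hb
      rcases ha with ha | ha <;> rw [ha] at hb <;> linarith
    have hsub : (({ω | Y ω = q - 1/K} ∪ {ω | Y ω = q}) ∪ {ω | Y ω = q + 1/K}) ⊆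
        {ω | Y ω ≤ lam} := by
      intro ω hω
      simp only [Set.mem_union, Set.mem_setOf_eq] at hω ⊢
      rcases hω with (hω | hω) | hω <;> rw [hω] <;> linarith
    have hS : μ (({ω | Y ω = q - 1/K} ∪ {ω | Y ω = q}) ∪ {ω | Y ω = q + 1/K}) = 1 := by
      rw [measure_union hd231 (hY (measurableSet_singleton _)),
        measure_union hd23 (hY (measurableSet_singleton _)), hY1, hY2, hY3,
        ← ENNReal.ofReal_add hmq hmq', ← ENNReal.ofReal_add (by linarith) hmq,
        show q * (1 - q) + (1 - 2 * q * (1 - q)) + q * (1 - q) = (1:ℝ) from by ring,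
        ENNReal.ofReal_one]
    calc μ {ω | X ω ≤ lam} ≤ 1 := prob_le_one
      _ = μ (({ω | Y ω = q - 1/K} ∪ {ω | Y ω = q}) ∪ {ω | Y ω = q + 1/K}) := hS.symm
      _ ≤ μ {ω | Y ω ≤ lam} := measure_mono hsub
end

section
/- Let K > 0 be real, r ≥ 2 an integer, T ∈ ℕ, and c ∈ [0,1]. Let (p_t)_{t≥0} and (q_t)_{t≥0} be stochastic processes on a common probability space such that p_t ≥ q_t almost surely for every t ∈ {0,…,T}, where (q_t) is a neutral-position frequency chain with deterministic initial value q_0 = p_0 = c, i.e., a sequence of [0,1]-valued random variables adapted to a filtration (F_t) such that, conditionally on F_t, q_{t+1} = q_t + 1/K with probability q_t(1 - q_t), q_{t+1} = q_t - 1/K with probability q_t(1 - q_t), and q_{t+1} = q_t with the remaining probability. Then P[ min_{t ∈ {0,…,T}} p_t ≤ c - 1/(2r) ] ≤ 2 exp( - K² / (8 T r²) ). -/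
open MeasureTheory

/-- If the process `(p_t)` pathwise dominates a neutral-position frequency
chain `(q_t)` of the `r`-cGA with parameter `K > 0` and common deterministic initial value
`p_0 = q_0 = c`, then the probability that within `T` steps some `p_t` drops to at most
`c - 1/(2r)` is at most `2 exp(-K² / (8 T r²))`. -/
theorem weak_preference_concentration
    {Ω : Type*} {m0 : MeasurableSpace Ω} (μ : Measure Ω) [IsProbabilityMeasure μ]
    (ℱ : Filtration ℕ m0) (K : ℝ) (hK : 0 < K) (r : ℕ) (hr : 2 ≤ r) (T : ℕ)
    (c : ℝ) (hc : c ∈ Set.Icc (0 : ℝ) 1)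
    (p q : ℕ → Ω → ℝ) (hp0 : p 0 = fun _ => c) (hq0 : q 0 = fun _ => c)
    (hadapted : Adapted ℱ q)
    (hmem : ∀ t, ∀ᵐ ω ∂μ, q t ω ∈ Set.Icc (0 : ℝ) 1)
    (hcases : ∀ t, ∀ᵐ ω ∂μ,
      q (t + 1) ω = q t ω + 1 / K ∨ q (t + 1) ω = q t ω - 1 / K ∨ q (t + 1) ω = q t ω)
    (hup : ∀ t,
      μ[({ω | q (t + 1) ω = q t ω + 1 / K}).indicator (fun _ => (1 : ℝ)) | ℱ t]
        =ᵐ[μ] fun ω => q t ω * (1 - q t ω))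
    (hdown : ∀ t,
      μ[({ω | q (t + 1) ω = q t ω - 1 / K}).indicator (fun _ => (1 : ℝ)) | ℱ t]
        =ᵐ[μ] fun ω => q t ω * (1 - q t ω))
    (hstay : ∀ t,
      μ[({ω | q (t + 1) ω = q t ω}).indicator (fun _ => (1 : ℝ)) | ℱ t]
        =ᵐ[μ] fun ω => 1 - 2 * (q t ω * (1 - q t ω)))
    (hdom : ∀ t ≤ T, ∀ᵐ ω ∂μ, q t ω ≤ p t ω) :
    μ {ω | ∃ t ∈ Finset.range (T + 1), p t ω ≤ c - 1 / (2 * (r : ℝ))}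
      ≤ ENNReal.ofReal (2 * Real.exp (-K ^ 2 / (8 * T * (r : ℝ) ^ 2))) := by
  -- trivial case T = 0
  rcases Nat.eq_zero_or_pos T with hT0 | hT
  · subst hT0
    have h1 : μ {ω | ∃ t ∈ Finset.range (0 + 1), p t ω ≤ c - 1 / (2 * (r : ℝ))} ≤ 1 :=
      prob_le_one
    refine h1.trans ?_
    norm_num
  -- main case
  have hr2 : (2 : ℝ) ≤ (r : ℝ) := by exact_mod_cast hr
  have hrpos : (0 : ℝ) < (r : ℝ) := by linarith
  have hTpos : (0 : ℝ) < (T : ℝ) := by exact_mod_cast hT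
  set lam : ℝ := K ^ 2 / (2 * (r : ℝ) * T) with hlam_def
  have hlam : 0 < lam := by positivity
  set g : ℕ → Ω → ℝ := fun t ω => Real.exp (-lam * q t ω) with hg_def
  have hgpos : ∀ t ω, 0 < g t ω := fun t ω => Real.exp_pos _
  have h_meas : ∀ t, StronglyMeasurable[ℱ t] (g t) := fun t =>
    Real.continuous_exp.comp_stronglyMeasurable ((hadapted t).const_mul (-lam)).stronglyMeasurable
  have h_bound : ∀ t, ∀ᵐ ω ∂μ, ‖g t ω‖ ≤ 1 := by
    intro t
    filter_upwards [hmem t] with ω hω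
    rw [Real.norm_eq_abs, abs_of_pos (hgpos t ω)]
    rw [show (1 : ℝ) = Real.exp 0 by simp]
    apply Real.exp_le_exp.2
    nlinarith [hω.1]
  have h_int : ∀ t, Integrable (g t) μ := fun t =>
    (integrable_const (1 : ℝ)).mono' ((h_meas t).mono (ℱ.le t)).aestronglyMeasurable
      (h_bound t)
  -- the three events
  set A : ℕ → Set Ω := fun t => {ω | q (t + 1) ω = q t ω + 1 / K} with hA_def
  set B : ℕ → Set Ω := fun t => {ω | q (t + 1) ω = q t ω - 1 / K} with hB_def
  set Cs : ℕ → Set Ω := fun t => {ω | q (t + 1) ω = q t ω} with hC_def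
  have hqmeas : ∀ t, Measurable (q t) := fun t =>
    (hadapted t).mono (ℱ.le t) le_rfl
  have hAmeas : ∀ t, MeasurableSet (A t) := fun t =>
    measurableSet_eq_fun (hqmeas (t + 1)) ((hqmeas t).add_const _)
  have hBmeas : ∀ t, MeasurableSet (B t) := fun t =>
    measurableSet_eq_fun (hqmeas (t + 1)) ((hqmeas t).add_const _)
  have hCmeas : ∀ t, MeasurableSet (Cs t) := fun t =>
    measurableSet_eq_fun (hqmeas (t + 1)) (hqmeas t)
  have hind_int : ∀ (s : Set Ω), MeasurableSet s →
      Integrable (s.indicator (fun _ => (1 : ℝ))) μ := fun s hs =>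
    (integrable_const (1 : ℝ)).indicator hs
  have hmul_int : ∀ t (s : Set Ω), MeasurableSet s →
      Integrable (g t * s.indicator (fun _ => (1 : ℝ))) μ := by
    intro t s hs
    refine (integrable_const (1 : ℝ)).mono'
      (((h_meas t).mono (ℱ.le t)).aestronglyMeasurable.mul
        ((hind_int s hs).aestronglyMeasurable)) ?_
    filter_upwards [h_bound t] with ω hω
    rw [Pi.mul_apply, norm_mul]
    have : ‖s.indicator (fun _ => (1 : ℝ)) ω‖ ≤ 1 := by
      classical
      rw [Set.indicator_apply]
      split <;> simp
    calc ‖g t ω‖ * ‖s.indicator (fun _ => (1:ℝ)) ω‖ ≤ 1 * 1 :=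
          mul_le_mul hω this (norm_nonneg _) zero_le_one
      _ = 1 := by ring
  have hKne : 1 / K ≠ 0 := one_div_ne_zero hK.ne'
  -- pointwise decomposition
  have hdecomp : ∀ t, g (t + 1) =ᵐ[μ]
      Real.exp (-lam / K) • (g t * (A t).indicator (fun _ => (1 : ℝ)))
      + Real.exp (lam / K) • (g t * (B t).indicator (fun _ => (1 : ℝ)))
      + g t * (Cs t).indicator (fun _ => (1 : ℝ)) := by
    intro t
    filter_upwards [hcases t] with ω hω
    simp only [Pi.add_apply, Pi.smul_apply, Pi.mul_apply, smul_eq_mul]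
    rcases hω with h | h | h
    · have hB' : ω ∉ B t := fun h2 => hKne (by
        have h2' : q (t + 1) ω = q t ω - 1 / K := h2
        linarith)
      have hC' : ω ∉ Cs t := fun h2 => hKne (by
        have h2' : q (t + 1) ω = q t ω := h2
        linarith)
      rw [Set.indicator_of_mem (show ω ∈ A t from h), Set.indicator_of_notMem hB',
        Set.indicator_of_notMem hC']
      simp only [hg_def, h, mul_zero, mul_one, add_zero]
      rw [← Real.exp_add]
      ring_nf
    · have hA' : ω ∉ A t := fun h2 => hKne (by
        have h2' : q (t + 1) ω = q t ω + 1 / K := h2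
        linarith)
      have hC' : ω ∉ Cs t := fun h2 => hKne (by
        have h2' : q (t + 1) ω = q t ω := h2
        linarith)
      rw [Set.indicator_of_mem (show ω ∈ B t from h), Set.indicator_of_notMem hA',
        Set.indicator_of_notMem hC']
      simp only [hg_def, h, mul_zero, mul_one, zero_add, add_zero]
      rw [← Real.exp_add]
      ring_nf
    · have hA' : ω ∉ A t := fun h2 => hKne (by
        have h2' : q (t + 1) ω = q t ω + 1 / K := h2
        linarith)
      have hB' : ω ∉ B t := fun h2 => hKne (by
        have h2' : q (t + 1) ω = q t ω - 1 / K := h2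
        linarith)
      rw [Set.indicator_of_mem (show ω ∈ Cs t from h), Set.indicator_of_notMem hA',
        Set.indicator_of_notMem hB']
      simp [hg_def, h]
  set Ch : ℝ := Real.cosh (lam / K) with hCh_def
  have hCh1 : 1 ≤ Ch := Real.one_le_cosh _
  -- conditional expectation computation
  have hcond : ∀ t, μ[g (t + 1) | ℱ t] =ᵐ[μ]
      fun ω => g t ω * (1 + 2 * (q t ω * (1 - q t ω)) * (Ch - 1)) := by
    intro t
    have e1 : μ[g t * (A t).indicator (fun _ => (1 : ℝ)) | ℱ t] =ᵐ[μ]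
        fun ω => g t ω * (q t ω * (1 - q t ω)) := by
      refine (condExp_mul_of_stronglyMeasurable_left (h_meas t)
        (hmul_int t _ (hAmeas t)) (hind_int _ (hAmeas t))).trans ?_
      filter_upwards [hup t] with ω hω
      simp only [Pi.mul_apply, hA_def, hω]
    have e2 : μ[g t * (B t).indicator (fun _ => (1 : ℝ)) | ℱ t] =ᵐ[μ]
        fun ω => g t ω * (q t ω * (1 - q t ω)) := by
      refine (condExp_mul_of_stronglyMeasurable_left (h_meas t)
        (hmul_int t _ (hBmeas t)) (hind_int _ (hBmeas t))).trans ?_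
      filter_upwards [hdown t] with ω hω
      simp only [Pi.mul_apply, hB_def, hω]
    have e3 : μ[g t * (Cs t).indicator (fun _ => (1 : ℝ)) | ℱ t] =ᵐ[μ]
        fun ω => g t ω * (1 - 2 * (q t ω * (1 - q t ω))) := by
      refine (condExp_mul_of_stronglyMeasurable_left (h_meas t)
        (hmul_int t _ (hCmeas t)) (hind_int _ (hCmeas t))).trans ?_
      filter_upwards [hstay t] with ω hω
      simp only [Pi.mul_apply, hC_def, hω]
    have hintA := hmul_int t _ (hAmeas t)
    have hintB := hmul_int t _ (hBmeas t)
    have hintC := hmul_int t _ (hCmeas t)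
    have step := condExp_congr_ae (m := ℱ t) (μ := μ) (hdecomp t)
    refine step.trans ?_
    have add1 := condExp_add (m := ℱ t)
      ((hintA.smul (Real.exp (-lam / K))).add (hintB.smul (Real.exp (lam / K)))) hintC
    have add2 := condExp_add (m := ℱ t) (hintA.smul (Real.exp (-lam / K)))
      (hintB.smul (Real.exp (lam / K)))
    have sm1 := condExp_smul (m := ℱ t) (μ := μ) (Real.exp (-lam / K))
      (g t * (A t).indicator (fun _ => (1 : ℝ)))
    have sm2 := condExp_smul (m := ℱ t) (μ := μ) (Real.exp (lam / K))
      (g t * (B t).indicator (fun _ => (1 : ℝ)))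
    filter_upwards [add1, add2, sm1, sm2, e1, e2, e3] with ω h1 h2 h3 h4 h5 h6 h7
    rw [h1]
    simp only [Pi.add_apply] at h2 ⊢
    rw [h2]
    simp only [Pi.smul_apply, smul_eq_mul] at h3 h4 ⊢
    rw [h3, h4, h5, h6, h7]
    have hch : Ch = (Real.exp (lam / K) + Real.exp (-(lam / K))) / 2 := Real.cosh_eq _
    rw [hch]
    rw [show -lam / K = -(lam / K) by ring]
    ring
  -- submartingale
  have hsub : Submartingale g ℱ μ := by
    refine submartingale_nat (fun t => h_meas t) h_int ?_
    intro t
    have := hcond t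
    filter_upwards [this, hmem t] with ω h1 h2
    rw [h1]
    have hs : 0 ≤ q t ω * (1 - q t ω) := mul_nonneg h2.1 (by linarith [h2.2])
    nlinarith [mul_nonneg (mul_nonneg (hgpos t ω).le hs) (sub_nonneg.2 hCh1)]
  -- expectation recursion
  have hrec : ∀ t, ∫ ω, g (t + 1) ω ∂μ ≤ Ch * ∫ ω, g t ω ∂μ := by
    intro t
    rw [← integral_condExp (ℱ.le t) (f := g (t+1))]
    rw [integral_congr_ae (hcond t)]
    have hint1 : Integrable (fun ω => g t ω * (1 + 2 * (q t ω * (1 - q t ω)) * (Ch - 1))) μ :=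
      integrable_condExp.congr (hcond t)
    have hint2 : Integrable (fun ω => Ch * g t ω) μ := (h_int t).const_mul Ch
    calc ∫ ω, g t ω * (1 + 2 * (q t ω * (1 - q t ω)) * (Ch - 1)) ∂μ
        ≤ ∫ ω, Ch * g t ω ∂μ := by
          refine integral_mono_ae hint1 hint2 ?_
          filter_upwards [hmem t] with ω hω
          have hs0 : 0 ≤ q t ω * (1 - q t ω) := mul_nonneg hω.1 (by linarith [hω.2])
          have hs1 : q t ω * (1 - q t ω) ≤ 1 / 2 := by nlinarith [hω.1, hω.2]
          nlinarith [mul_nonneg (mul_nonneg (sub_nonneg.2 hCh1) (hgpos t ω).le)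
            (by linarith : (0:ℝ) ≤ 1 - 2 * (q t ω * (1 - q t ω)))]
      _ = Ch * ∫ ω, g t ω ∂μ := integral_const_mul _ _
  have hE0 : ∫ ω, g 0 ω ∂μ = Real.exp (-lam * c) := by
    have hg0 : g 0 = fun _ => Real.exp (-lam * c) := by
      funext ω; rw [hg_def]; simp [hq0]
    rw [hg0, integral_const]; simp
  have hET : ∀ n, ∫ ω, g n ω ∂μ ≤ Ch ^ n * Real.exp (-lam * c) := by
    intro n
    induction n with
    | zero => simp [hE0]
    | succ n ih =>
        calc ∫ ω, g (n + 1) ω ∂μ ≤ Ch * ∫ ω, g n ω ∂μ := hrec n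
          _ ≤ Ch * (Ch ^ n * Real.exp (-lam * c)) := by
              apply mul_le_mul_of_nonneg_left ih (by linarith)
          _ = Ch ^ (n + 1) * Real.exp (-lam * c) := by ring
  -- the mgf bound
  have hmgf : ∫ ω, g T ω ∂μ ≤ Real.exp ((T : ℝ) * (lam / K) ^ 2 / 2 - lam * c) := by
    refine (hET T).trans ?_
    have h1 : Ch ^ T ≤ Real.exp ((lam / K) ^ 2 / 2) ^ T :=
      pow_le_pow_left₀ (by linarith) (Real.cosh_le_exp_half_sq _) T
    calc Ch ^ T * Real.exp (-lam * c)
        ≤ Real.exp ((lam / K) ^ 2 / 2) ^ T * Real.exp (-lam * c) := by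
          apply mul_le_mul_of_nonneg_right h1 (Real.exp_pos _).le
      _ = Real.exp ((T : ℝ) * ((lam / K) ^ 2 / 2)) * Real.exp (-lam * c) := by
          rw [← Real.exp_nat_mul]
      _ = Real.exp ((T : ℝ) * (lam / K) ^ 2 / 2 - lam * c) := by
          rw [← Real.exp_add]; ring_nf
  -- Doob maximal inequality
  set eps : ℝ := Real.exp (-lam * (c - 1 / (2 * (r : ℝ)))) with heps_def
  have hepspos : 0 < eps := Real.exp_pos _
  set εn : NNReal := eps.toNNReal with hen_def
  have hεn : (εn : ℝ) = eps := Real.coe_toNNReal _ hepspos.le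
  have hmax := maximal_ineq hsub (fun t ω => (hgpos t ω).le) (ε := εn) T
  set S : Set Ω := {ω | (εn : ℝ) ≤ (Finset.range (T + 1)).sup'
    Finset.nonempty_range_add_one fun k => g k ω} with hS_def
  -- event inclusion
  have hdom' : ∀ᵐ ω ∂μ, ∀ t, t ≤ T → q t ω ≤ p t ω := by
    rw [ae_all_iff]
    intro t
    by_cases ht : t ≤ T
    · filter_upwards [hdom t ht] with ω hω _; exact hω
    · filter_upwards with ω hω; exact absurd hω ht
  have hincl : μ {ω | ∃ t ∈ Finset.range (T + 1), p t ω ≤ c - 1 / (2 * (r : ℝ))} ≤ μ S := by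
    apply measure_mono_ae
    filter_upwards [hdom'] with ω hω hmem'
    obtain ⟨t, ht, hpt⟩ := hmem'
    have ht' : t ≤ T := Nat.lt_succ_iff.mp (Finset.mem_range.mp ht)
    have hqt : q t ω ≤ c - 1 / (2 * (r : ℝ)) := (hω t ht').trans hpt
    have : eps ≤ g t ω := by
      rw [heps_def, hg_def]
      apply Real.exp_le_exp.2
      nlinarith
    show (εn : ℝ) ≤ (Finset.range (T + 1)).sup' Finset.nonempty_range_add_one fun k => g k ω
    rw [hεn]
    exact this.trans (Finset.le_sup' (fun k => g k ω) ht)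
  -- combine
  have hset_int : ∫ ω in S, g T ω ∂μ ≤ ∫ ω, g T ω ∂μ :=
    setIntegral_le_integral (h_int T) (Filter.Eventually.of_forall fun ω => (hgpos T ω).le)
  have hofreal : ENNReal.ofReal (∫ ω in S, g T ω ∂μ)
      ≤ ENNReal.ofReal (Real.exp ((T : ℝ) * (lam / K) ^ 2 / 2 - lam * c)) :=
    ENNReal.ofReal_le_ofReal (hset_int.trans hmgf)
  have hmax' : ENNReal.ofReal eps * μ S
      ≤ ENNReal.ofReal (Real.exp ((T : ℝ) * (lam / K) ^ 2 / 2 - lam * c)) := by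
    calc ENNReal.ofReal eps * μ S = εn • μ S := by
          rw [ENNReal.smul_def, ENNReal.ofReal, hen_def]
          rfl
      _ ≤ ENNReal.ofReal (∫ ω in S, g T ω ∂μ) := hmax
      _ ≤ _ := hofreal
  -- final real inequality
  have hfinal_real : Real.exp ((T : ℝ) * (lam / K) ^ 2 / 2 - lam * c)
      ≤ eps * (2 * Real.exp (-K ^ 2 / (8 * T * (r : ℝ) ^ 2))) := by
    have hδ : -lam * (c - 1 / (2 * (r : ℝ))) + -K ^ 2 / (8 * (T : ℝ) * (r : ℝ) ^ 2)
        = (T : ℝ) * (lam / K) ^ 2 / 2 - lam * c := by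
      rw [hlam_def]
      field_simp
      ring
    calc Real.exp ((T : ℝ) * (lam / K) ^ 2 / 2 - lam * c)
        ≤ 2 * Real.exp ((T : ℝ) * (lam / K) ^ 2 / 2 - lam * c) := by
          nlinarith [Real.exp_pos ((T : ℝ) * (lam / K) ^ 2 / 2 - lam * c)]
      _ = 2 * Real.exp (-lam * (c - 1 / (2 * (r : ℝ))) + -K ^ 2 / (8 * (T : ℝ) * (r : ℝ) ^ 2)) := by
          rw [hδ]
      _ = eps * (2 * Real.exp (-K ^ 2 / (8 * T * (r : ℝ) ^ 2))) := by
          rw [heps_def, Real.exp_add]; ring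
  have : μ {ω | ∃ t ∈ Finset.range (T + 1), p t ω ≤ c - 1 / (2 * (r : ℝ))}
      ≤ ENNReal.ofReal (2 * Real.exp (-K ^ 2 / (8 * T * (r : ℝ) ^ 2))) := by
    rw [← ENNReal.mul_le_mul_iff_right (a := ENNReal.ofReal eps)
      (by simp [ENNReal.ofReal_pos.2 hepspos, (ENNReal.ofReal_pos.2 hepspos).ne'])
      ENNReal.ofReal_ne_top]
    calc ENNReal.ofReal eps * μ {ω | ∃ t ∈ Finset.range (T + 1), p t ω ≤ c - 1 / (2 * (r : ℝ))}
        ≤ ENNReal.ofReal eps * μ S := by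
          exact mul_le_mul_right hincl _
      _ ≤ ENNReal.ofReal (Real.exp ((T : ℝ) * (lam / K) ^ 2 / 2 - lam * c)) := hmax'
      _ ≤ ENNReal.ofReal (eps * (2 * Real.exp (-K ^ 2 / (8 * T * (r : ℝ) ^ 2)))) :=
          ENNReal.ofReal_le_ofReal hfinal_real
      _ = ENNReal.ofReal eps * ENNReal.ofReal (2 * Real.exp (-K ^ 2 / (8 * T * (r : ℝ) ^ 2))) :=
          ENNReal.ofReal_mul hepspos.le
  exact this
end

section
/- Let m ∈ ℕ and p_1, …, p_m ∈ [0,1]. Let X = Σ_{j=1}^{m} A_j and Y = Σ_{j=1}^{m} B_j, where A_1, …, A_m, B_1, …, B_m are mutually independent random variables with A_j and B_j each Bernoulli distributed with parameter p_j. Let σ² = Σ_{j=1}^{m} p_j(1 - p_j). Then P[X = Y] ≥ 4 / ( 9 ( 2√(3σ²) + 1 ) ). -/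
open MeasureTheory ProbabilityTheory

section Helpers
variable {Ω : Type*} [MeasurableSpace Ω] {μ : Measure Ω} [IsProbabilityMeasure μ]


lemma bern_conull {f : Ω → ℝ} {q : ℝ} (hq : q ∈ Set.Icc (0:ℝ) 1) (hf : Measurable f)
    (h1 : μ {ω | f ω = 1} = ENNReal.ofReal q)
    (h0 : μ {ω | f ω = 0} = ENNReal.ofReal (1 - q)) :
    μ ({ω | f ω = 1} ∪ {ω | f ω = 0})ᶜ = 0 := by
  have hd : Disjoint {ω | f ω = 1} {ω | f ω = 0} := by
    rw [Set.disjoint_left]; rintro ω h1' h0'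
    simp only [Set.mem_setOf_eq] at h1' h0'; rw [h1'] at h0'; norm_num at h0'
  have hm0 : MeasurableSet {ω | f ω = 0} := hf (measurableSet_singleton 0)
  have hm1 : MeasurableSet {ω | f ω = 1} := hf (measurableSet_singleton 1)
  have hu : μ ({ω | f ω = 1} ∪ {ω | f ω = 0}) = 1 := by
    rw [measure_union hd hm0, h1, h0, ← ENNReal.ofReal_add hq.1 (by linarith [hq.2])]
    norm_num
  rw [measure_compl (hm1.union hm0) (by simp), hu]
  simp

lemma bern_ae {f : Ω → ℝ} (h : μ ({ω | f ω = 1} ∪ {ω | f ω = 0})ᶜ = 0) :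
    ∀ᵐ ω ∂μ, f ω = 1 ∨ f ω = 0 := by
  rw [ae_iff]; refine measure_mono_null ?_ h
  intro ω hω; simpa using hω

lemma bern_map {f : Ω → ℝ} {q : ℝ} (hq : q ∈ Set.Icc (0:ℝ) 1) (hf : Measurable f)
    (h1 : μ {ω | f ω = 1} = ENNReal.ofReal q)
    (h0 : μ {ω | f ω = 0} = ENNReal.ofReal (1 - q)) :
    Measure.map f μ
      = ENNReal.ofReal q • Measure.dirac (1:ℝ) + ENNReal.ofReal (1-q) • Measure.dirac 0 := by
  classical
  ext s hs
  rw [Measure.map_apply hf hs]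
  have hco := bern_conull (μ := μ) hq hf h1 h0
  have key : μ (f ⁻¹' s) = μ (f ⁻¹' s ∩ {ω | f ω = 1}) + μ (f ⁻¹' s ∩ {ω | f ω = 0}) := by
    have hdisj : Disjoint (f ⁻¹' s ∩ {ω | f ω = 1}) (f ⁻¹' s ∩ {ω | f ω = 0}) := by
      rw [Set.disjoint_left]; rintro ω ⟨_, h1'⟩ ⟨_, h0'⟩
      simp only [Set.mem_setOf_eq] at h1' h0'; rw [h1'] at h0'; norm_num at h0'
    have hm : MeasurableSet (f ⁻¹' s ∩ {ω | f ω = 0}) :=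
      (hf hs).inter (hf (measurableSet_singleton 0))
    rw [← measure_union hdisj hm, ← Set.inter_union_distrib_left]
    exact (measure_inter_conull hco).symm
  have e1 : f ⁻¹' s ∩ {ω | f ω = 1} = if (1:ℝ) ∈ s then {ω | f ω = 1} else ∅ := by
    split_ifs with h
    · ext ω; simp only [Set.mem_inter_iff, Set.mem_preimage, Set.mem_setOf_eq]
      exact ⟨fun h' => h'.2, fun h' => ⟨by rw [h']; exact h, h'⟩⟩
    · ext ω; simp only [Set.mem_inter_iff, Set.mem_preimage, Set.mem_setOf_eq, Set.mem_empty_iff_false, iff_false]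
      rintro ⟨hs', h1'⟩; exact h (h1' ▸ hs')
  have e0 : f ⁻¹' s ∩ {ω | f ω = 0} = if (0:ℝ) ∈ s then {ω | f ω = 0} else ∅ := by
    split_ifs with h
    · ext ω; simp only [Set.mem_inter_iff, Set.mem_preimage, Set.mem_setOf_eq]
      exact ⟨fun h' => h'.2, fun h' => ⟨by rw [h']; exact h, h'⟩⟩
    · ext ω; simp only [Set.mem_inter_iff, Set.mem_preimage, Set.mem_setOf_eq, Set.mem_empty_iff_false, iff_false]
      rintro ⟨hs', h0'⟩; exact h (h0' ▸ hs')
  rw [key, e1, e0]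
  simp only [Measure.add_apply, Measure.smul_apply, smul_eq_mul,
    Measure.dirac_apply' _ hs]
  split_ifs with ha hb hb
  · rw [h1, h0]; simp [Set.indicator_of_mem ha, Set.indicator_of_mem hb]
  · rw [h1]; simp [Set.indicator_of_mem ha, Set.indicator_of_notMem hb]
  · rw [h0]; simp [Set.indicator_of_mem hb, Set.indicator_of_notMem ha]
  · simp [Set.indicator_of_notMem ha, Set.indicator_of_notMem hb]

lemma bern_memℒp {f : Ω → ℝ} (hf : Measurable f)
    (h : μ ({ω | f ω = 1} ∪ {ω | f ω = 0})ᶜ = 0) : MemLp f 2 μ := by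
  refine MemLp.of_bound hf.aestronglyMeasurable 1 ?_
  filter_upwards [bern_ae h] with ω hω
  rcases hω with h' | h' <;> simp [h']

lemma bern_integral {f : Ω → ℝ} {q : ℝ} (hq : q ∈ Set.Icc (0:ℝ) 1) (hf : Measurable f)
    (h1 : μ {ω | f ω = 1} = ENNReal.ofReal q)
    (h0 : μ {ω | f ω = 0} = ENNReal.ofReal (1 - q)) :
    ∫ ω, f ω ∂μ = q := by
  have hco := bern_conull (μ := μ) hq hf h1 h0
  have hind : f =ᵐ[μ] Set.indicator {ω | f ω = 1} (fun _ => (1:ℝ)) := by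
    filter_upwards [bern_ae hco] with ω hω
    rcases hω with h' | h'
    · simp [Set.indicator_apply, Set.mem_setOf_eq, h']
    · simp [Set.indicator_apply, Set.mem_setOf_eq, h']
  rw [integral_congr_ae hind, integral_indicator_const (1:ℝ) (show MeasurableSet {ω | f ω = 1} from hf (measurableSet_singleton 1)), measureReal_def, h1]
  simp [ENNReal.toReal_ofReal hq.1]

lemma bern_variance {f : Ω → ℝ} {q : ℝ} (hq : q ∈ Set.Icc (0:ℝ) 1) (hf : Measurable f)
    (h1 : μ {ω | f ω = 1} = ENNReal.ofReal q)
    (h0 : μ {ω | f ω = 0} = ENNReal.ofReal (1 - q)) :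
    variance f μ = q * (1 - q) := by
  have hco := bern_conull (μ := μ) hq hf h1 h0
  rw [variance_eq_sub (bern_memℒp hf hco)]
  have hsq : (fun ω => (f ^ 2) ω) =ᵐ[μ] f := by
    filter_upwards [bern_ae hco] with ω hω
    rcases hω with h' | h' <;> simp [Pi.pow_apply, h']
  have : μ[f ^ 2] = q := by
    rw [show μ[f ^ 2] = ∫ ω, (f ^ 2) ω ∂μ from rfl, integral_congr_ae hsq,
      bern_integral hq hf h1 h0]
  rw [this, show μ[f] = ∫ ω, f ω ∂μ from rfl, bern_integral hq hf h1 h0]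
  ring

lemma iIndepFun_comp_of_injective {ι κ : Type*} {f : κ → Ω → ℝ}
    (h : iIndepFun f μ) (g : ι → κ) (hg : Function.Injective g) :
    iIndepFun (fun i => f (g i)) μ := by
  classical
  rw [iIndepFun_iff_measure_inter_preimage_eq_mul] at h ⊢
  intro S sets hsets
  set sets' : κ → Set ℝ := fun k => if hk : ∃ i ∈ S, g i = k then sets hk.choose else Set.univ
    with hsets'
  have key : ∀ i ∈ S, sets' (g i) = sets i := by
    intro i hi
    have hk : ∃ i' ∈ S, g i' = g i := ⟨i, hi, rfl⟩
    rw [hsets']; simp only [dif_pos hk]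
    have := hk.choose_spec.2
    rw [hg this]
  have hmeas : ∀ k ∈ S.map ⟨g, hg⟩, MeasurableSet (sets' k) := by
    intro k hk
    rcases Finset.mem_map.1 hk with ⟨i, hi, rfl⟩
    simp only [Function.Embedding.coeFn_mk]
    rw [key i hi]; exact hsets i hi
  have H := h (S.map ⟨g, hg⟩) hmeas
  have h1 : (⋂ k ∈ S.map ⟨g, hg⟩, f k ⁻¹' sets' k) = ⋂ i ∈ S, f (g i) ⁻¹' sets i := by
    ext ω
    simp only [Set.mem_iInter, Finset.mem_map, Function.Embedding.coeFn_mk]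
    constructor
    · intro H' i hi
      have := H' (g i) ⟨i, hi, rfl⟩
      rwa [key i hi] at this
    · rintro H' k ⟨i, hi, rfl⟩
      rw [key i hi]; exact H' i hi
  have h2 : (∏ k ∈ S.map ⟨g, hg⟩, μ (f k ⁻¹' sets' k)) = ∏ i ∈ S, μ (f (g i) ⁻¹' sets i) := by
    rw [Finset.prod_map]
    exact Finset.prod_congr rfl fun i hi => by rw [Function.Embedding.coeFn_mk, key i hi]
  rw [h1, h2] at H
  exact H

lemma joint_law_pi {n : ℕ} {f : Fin n → Ω → ℝ} (hmeas : ∀ i, Measurable (f i))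
    (h : iIndepFun f μ) :
    Measure.map (fun ω i => f i ω) μ = Measure.pi (fun i => Measure.map (f i) μ) := by
  have hpm : ∀ i, IsProbabilityMeasure (Measure.map (f i) μ) :=
    fun i => Measure.isProbabilityMeasure_map (hmeas i).aemeasurable
  refine (Measure.pi_eq fun s hs => ?_).symm
  rw [Measure.map_apply (measurable_pi_lambda _ fun i => hmeas i) (MeasurableSet.univ_pi hs)]
  have hpre : (fun ω i => f i ω) ⁻¹' Set.pi Set.univ s = ⋂ i ∈ Finset.univ, f i ⁻¹' s i := by
    ext ω; simp [Set.mem_pi]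
  rw [hpre, h.measure_inter_preimage_eq_mul Finset.univ (fun i _ => hs i)]
  exact Finset.prod_congr rfl fun i _ =>
    (Measure.map_apply (hmeas i) (hs i)).symm

section family
variable {n : ℕ} {f : Fin n → Ω → ℝ} {q : Fin n → ℝ}

lemma fam_memℒp (hq : ∀ j, q j ∈ Set.Icc (0:ℝ) 1) (hm : ∀ j, Measurable (f j))
    (h1 : ∀ j, μ {ω | f j ω = 1} = ENNReal.ofReal (q j))
    (h0 : ∀ j, μ {ω | f j ω = 0} = ENNReal.ofReal (1 - q j)) :
    MemLp (fun ω => ∑ j, f j ω) 2 μ := by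
  have he : (fun ω => ∑ j, f j ω) = ∑ j, f j := by ext ω; simp
  rw [he]
  exact memLp_finset_sum' _ fun j _ =>
    bern_memℒp (hm j) (bern_conull (hq j) (hm j) (h1 j) (h0 j))

lemma fam_integral (hq : ∀ j, q j ∈ Set.Icc (0:ℝ) 1) (hm : ∀ j, Measurable (f j))
    (h1 : ∀ j, μ {ω | f j ω = 1} = ENNReal.ofReal (q j))
    (h0 : ∀ j, μ {ω | f j ω = 0} = ENNReal.ofReal (1 - q j)) :
    ∫ ω, (∑ j, f j ω) ∂μ = ∑ j, q j := by
  rw [integral_finset_sum _ fun j _ =>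
    (bern_memℒp (hm j) (bern_conull (hq j) (hm j) (h1 j) (h0 j))).integrable one_le_two]
  exact Finset.sum_congr rfl fun j _ => bern_integral (hq j) (hm j) (h1 j) (h0 j)

lemma fam_variance (hq : ∀ j, q j ∈ Set.Icc (0:ℝ) 1) (hm : ∀ j, Measurable (f j))
    (hind : iIndepFun f μ)
    (h1 : ∀ j, μ {ω | f j ω = 1} = ENNReal.ofReal (q j))
    (h0 : ∀ j, μ {ω | f j ω = 0} = ENNReal.ofReal (1 - q j)) :
    variance (fun ω => ∑ j, f j ω) μ = ∑ j, q j * (1 - q j) := by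
  have he : (fun ω => ∑ j, f j ω) = ∑ j, f j := by ext ω; simp
  rw [he, IndepFun.variance_sum
    (fun j _ => bern_memℒp (hm j) (bern_conull (hq j) (hm j) (h1 j) (h0 j)))
    (fun i _ j _ hij => hind.indepFun hij)]
  exact Finset.sum_congr rfl fun j _ => bern_variance (hq j) (hm j) (h1 j) (h0 j)

lemma fam_ae_range (hm : ∀ j, Measurable (f j))
    (hq : ∀ j, q j ∈ Set.Icc (0:ℝ) 1)
    (h1 : ∀ j, μ {ω | f j ω = 1} = ENNReal.ofReal (q j))
    (h0 : ∀ j, μ {ω | f j ω = 0} = ENNReal.ofReal (1 - q j)) :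
    ∀ᵐ ω ∂μ, ∃ k ∈ Finset.range (n+1), (∑ j, f j ω) = (k : ℝ) := by
  have hae : ∀ᵐ ω ∂μ, ∀ j, f j ω = 1 ∨ f j ω = 0 :=
    (ae_all_iff).2 fun j => bern_ae (bern_conull (hq j) (hm j) (h1 j) (h0 j))
  filter_upwards [hae] with ω hω
  classical
  set F := Finset.univ.filter (fun j => f j ω = 1) with hF
  refine ⟨F.card, Finset.mem_range.2 (Nat.lt_succ_of_le (le_trans (Finset.card_filter_le _ _) (by simp))), ?_⟩
  have h1' : ∑ j, f j ω = ∑ j ∈ F, f j ω := by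
    refine (Finset.sum_subset (Finset.subset_univ F) fun j _ hj => ?_).symm
    rcases hω j with h' | h'
    · exact absurd (Finset.mem_filter.2 ⟨Finset.mem_univ j, h'⟩) hj
    · exact h'
  rw [h1']
  have : ∀ j ∈ F, f j ω = 1 := fun j hj => (Finset.mem_filter.1 hj).2
  rw [Finset.sum_congr rfl this]
  simp

end family


end Helpers

/-- Let `X = ∑_j A_j` and `Y = ∑_j B_j` be two sums of mutually
independent Bernoulli random variables, where `A_j` and `B_j` both have parameter `p_j`,
and let `σ² = ∑_j p_j (1 - p_j)`. Then `P[X = Y] ≥ 4 / (9 (2√(3σ²) + 1))`. -/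
theorem bernoulli_sums_collision
    {Ω : Type*} [MeasurableSpace Ω] (μ : Measure Ω) [IsProbabilityMeasure μ]
    (m : ℕ) (p : Fin m → ℝ) (hp : ∀ j, p j ∈ Set.Icc (0 : ℝ) 1)
    (A B : Fin m → Ω → ℝ)
    (hAmeas : ∀ j, Measurable (A j)) (hBmeas : ∀ j, Measurable (B j))
    (hindep : iIndepFun (Sum.elim A B) μ)
    (hA1 : ∀ j, μ {ω | A j ω = 1} = ENNReal.ofReal (p j))
    (hA0 : ∀ j, μ {ω | A j ω = 0} = ENNReal.ofReal (1 - p j))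
    (hB1 : ∀ j, μ {ω | B j ω = 1} = ENNReal.ofReal (p j))
    (hB0 : ∀ j, μ {ω | B j ω = 0} = ENNReal.ofReal (1 - p j)) :
    ENNReal.ofReal (4 / (9 * (2 * Real.sqrt (3 * ∑ j, p j * (1 - p j)) + 1)))
      ≤ μ {ω | ∑ j, A j ω = ∑ j, B j ω} := by

  classical
  set X : Ω → ℝ := fun ω => ∑ j, A j ω with hXdef
  set Y : Ω → ℝ := fun ω => ∑ j, B j ω with hYdef
  have hXmeas : Measurable X := Finset.measurable_sum _ fun j _ => hAmeas j
  have hYmeas : Measurable Y := Finset.measurable_sum _ fun j _ => hBmeas j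
  show ENNReal.ofReal (4 / (9 * (2 * Real.sqrt (3 * ∑ j, p j * (1 - p j)) + 1)))
      ≤ μ {ω | X ω = Y ω}
  have hXYset : MeasurableSet {ω | X ω = Y ω} := measurableSet_eq_fun hXmeas hYmeas
  set σ2 : ℝ := ∑ j, p j * (1 - p j) with hσ2
  have hσ2nn : 0 ≤ σ2 :=
    Finset.sum_nonneg fun j _ => mul_nonneg (hp j).1 (by linarith [(hp j).2])
  have hAind : iIndepFun A μ := by
    have h := iIndepFun_comp_of_injective hindep Sum.inl Sum.inl_injective
    simpa using h
  have hBind : iIndepFun B μ := by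
    have h := iIndepFun_comp_of_injective hindep Sum.inr Sum.inr_injective
    simpa using h
  rcases eq_or_lt_of_le hσ2nn with hz | hpos
  · -- degenerate case : σ² = 0
    have hterm : ∀ j, p j * (1 - p j) = 0 := by
      intro j
      have h := (Finset.sum_eq_zero_iff_of_nonneg
        (fun j _ => mul_nonneg (hp j).1 (by linarith [(hp j).2]))).1 hz.symm
      exact h j (Finset.mem_univ j)
    have haeconst : ∀ (f : Fin m → Ω → ℝ), (∀ j, Measurable (f j)) →
        (∀ j, μ {ω | f j ω = 1} = ENNReal.ofReal (p j)) →
        (∀ j, μ {ω | f j ω = 0} = ENNReal.ofReal (1 - p j)) →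
        ∀ j, ∀ᵐ ω ∂μ, f j ω = p j := by
      intro f hfm hf1 hf0 j
      rcases mul_eq_zero.1 (hterm j) with h | h
      · have hms : MeasurableSet {ω | f j ω = 0} := hfm j (measurableSet_singleton 0)
        have hc : μ {ω | f j ω = 0}ᶜ = 0 := by
          rw [measure_compl hms (measure_ne_top _ _), hf0 j, h]
          simp
        rw [ae_iff]
        refine measure_mono_null ?_ hc
        intro ω hω
        simp only [Set.mem_compl_iff, Set.mem_setOf_eq] at hω ⊢
        rw [h] at hω; exact hω
      · have h1 : p j = 1 := by linarith
        have hms : MeasurableSet {ω | f j ω = 1} := hfm j (measurableSet_singleton 1)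
        have hc : μ {ω | f j ω = 1}ᶜ = 0 := by
          rw [measure_compl hms (measure_ne_top _ _), hf1 j, h1]
          simp
        rw [ae_iff]
        refine measure_mono_null ?_ hc
        intro ω hω
        simp only [Set.mem_compl_iff, Set.mem_setOf_eq] at hω ⊢
        rw [h1] at hω; exact hω
    have hXY : ∀ᵐ ω ∂μ, X ω = Y ω := by
      have hA' : ∀ᵐ ω ∂μ, ∀ j, A j ω = p j :=
        ae_all_iff.2 (haeconst A hAmeas hA1 hA0)
      have hB' : ∀ᵐ ω ∂μ, ∀ j, B j ω = p j :=
        ae_all_iff.2 (haeconst B hBmeas hB1 hB0)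
      filter_upwards [hA', hB'] with ω h1 h2
      show (∑ j, A j ω) = ∑ j, B j ω
      rw [Finset.sum_congr rfl fun j _ => h1 j, Finset.sum_congr rfl fun j _ => h2 j]
    have hone : μ {ω | X ω = Y ω} = 1 := by
      rw [← prob_compl_eq_zero_iff hXYset]
      exact measure_mono_null (fun ω hω => hω) (ae_iff.1 hXY)
    rw [hone, ← hz]
    simp only [mul_zero, Real.sqrt_zero]
    norm_num
  · -- main case : σ² > 0
    set c : ℝ := ∑ j, p j with hc
    set s : ℝ := Real.sqrt (3 * σ2) with hs
    have hs0 : 0 < s := Real.sqrt_pos.2 (by linarith)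
    have hXint : ∫ ω, X ω ∂μ = c := by
      simp only [hXdef]; exact fam_integral hp hAmeas hA1 hA0
    have hXvar : variance X μ = σ2 := by
      simp only [hXdef]; exact fam_variance hp hAmeas hAind hA1 hA0
    have hXmem : MemLp X 2 μ := by
      rw [hXdef]; exact fam_memℒp hp hAmeas hA1 hA0
    -- Chebyshev
    have hcheb : μ {ω | s ≤ |X ω - c|} ≤ ENNReal.ofReal (1/3) := by
      have h := meas_ge_le_variance_div_sq (μ := μ) hXmem hs0
      rw [hXvar] at h
      have he : σ2 / s ^ 2 = 1/3 := by
        rw [hs, Real.sq_sqrt (by linarith : (0:ℝ) ≤ 3 * σ2)]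
        field_simp
      rw [he] at h
      rwa [show μ[X] = c from hXint] at h
    set G : Set Ω := {ω | s ≤ |X ω - c|} with hG
    have hGmeas : MeasurableSet G :=
      measurableSet_le measurable_const ((hXmeas.sub measurable_const).abs)
    have hG23 : ENNReal.ofReal (2/3) ≤ μ Gᶜ := by
      have h1' : (1:ENNReal) ≤ μ Gᶜ + ENNReal.ofReal (1/3) := by
        calc (1:ENNReal) = μ G + μ Gᶜ := by
              rw [measure_add_measure_compl hGmeas]; simp
        _ = μ Gᶜ + μ G := by rw [add_comm]
        _ ≤ μ Gᶜ + ENNReal.ofReal (1/3) := by gcongr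
      have he : ENNReal.ofReal (2/3) + ENNReal.ofReal (1/3) = 1 := by
        rw [← ENNReal.ofReal_add (by norm_num) (by norm_num)]; norm_num
      rw [← he] at h1'
      exact (ENNReal.add_le_add_iff_right (by simp)).1 h1'
    set J : Finset ℕ := (Finset.range (m+1)).filter (fun k => |(k:ℝ) - c| < s) with hJ
    have haeR : μ {ω | ∃ k ∈ Finset.range (m+1), X ω = (k:ℝ)}ᶜ = 0 := by
      have h := fam_ae_range (μ := μ) hAmeas hp hA1 hA0
      rw [ae_iff] at h
      refine measure_mono_null (fun ω hω => ?_) h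
      exact hω
    have hsubset : Gᶜ ∩ {ω | ∃ k ∈ Finset.range (m+1), X ω = (k:ℝ)}
        ⊆ ⋃ k ∈ J, X ⁻¹' {(k:ℝ)} := by
      rintro ω ⟨hω1, k, hk, hXk⟩
      have hω1' : |X ω - c| < s := not_le.1 hω1
      refine Set.mem_iUnion₂.2 ⟨k, Finset.mem_filter.2 ⟨hk, ?_⟩, hXk⟩
      rw [← hXk]; exact hω1'
    have hchain : ENNReal.ofReal (2/3) ≤ ∑ k ∈ J, μ (X ⁻¹' {(k:ℝ)}) := by
      calc ENNReal.ofReal (2/3) ≤ μ Gᶜ := hG23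
      _ = μ (Gᶜ ∩ {ω | ∃ k ∈ Finset.range (m+1), X ω = (k:ℝ)}) :=
        (measure_inter_conull haeR).symm
      _ ≤ μ (⋃ k ∈ J, X ⁻¹' {(k:ℝ)}) := measure_mono hsubset
      _ ≤ ∑ k ∈ J, μ (X ⁻¹' {(k:ℝ)}) := measure_biUnion_finset_le _ _
    -- identical distribution of X and Y
    have hlaw : ∀ j, Measure.map (A j) μ = Measure.map (B j) μ := fun j => by
      rw [bern_map (hp j) (hAmeas j) (hA1 j) (hA0 j),
        bern_map (hp j) (hBmeas j) (hB1 j) (hB0 j)]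
    have hsum_meas : Measurable (fun v : Fin m → ℝ => ∑ i, v i) :=
      Finset.measurable_sum _ fun i _ => measurable_pi_apply i
    have hmapXY : Measure.map X μ = Measure.map Y μ := by
      have hXcomp : X = (fun v : Fin m → ℝ => ∑ i, v i) ∘ (fun ω i => A i ω) := rfl
      have hYcomp : Y = (fun v : Fin m → ℝ => ∑ i, v i) ∘ (fun ω i => B i ω) := rfl
      rw [hXcomp, hYcomp,
        ← Measure.map_map hsum_meas (measurable_pi_lambda _ fun i => hAmeas i),
        ← Measure.map_map hsum_meas (measurable_pi_lambda _ fun i => hBmeas i),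
        joint_law_pi hAmeas hAind, joint_law_pi hBmeas hBind]
      exact congrArg _ (congrArg Measure.pi (funext hlaw))
    have hXYk : ∀ k : ℕ, μ (Y ⁻¹' {(k:ℝ)}) = μ (X ⁻¹' {(k:ℝ)}) := fun k => by
      rw [← Measure.map_apply hXmeas (measurableSet_singleton _),
        ← Measure.map_apply hYmeas (measurableSet_singleton _), hmapXY]
    -- independence of X and Y
    have hXYindep : IndepFun X Y μ := by
      have hSTdisj : Disjoint (Finset.univ.map ⟨Sum.inl, Sum.inl_injective⟩)
          ((Finset.univ.map ⟨Sum.inr, Sum.inr_injective⟩ : Finset (Fin m ⊕ Fin m))) := by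
        rw [Finset.disjoint_left]
        rintro k hk hk'
        rcases Finset.mem_map.1 hk with ⟨i, _, rfl⟩
        rcases Finset.mem_map.1 hk' with ⟨i', _, h⟩
        simp at h
      have helimmeas : ∀ i : Fin m ⊕ Fin m, Measurable (Sum.elim A B i) := by
        rintro (i | i)
        · exact hAmeas i
        · exact hBmeas i
      have h := hindep.indepFun_finset _ _ hSTdisj helimmeas
      have h2 := h.comp
        (φ := fun v : ((i : (Finset.univ.map ⟨Sum.inl, Sum.inl_injective⟩ :
            Finset (Fin m ⊕ Fin m))) → ℝ) => ∑ i, v i)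
        (ψ := fun v : ((i : (Finset.univ.map ⟨Sum.inr, Sum.inr_injective⟩ :
            Finset (Fin m ⊕ Fin m))) → ℝ) => ∑ i, v i)
        (Finset.measurable_sum _ fun i _ => measurable_pi_apply i)
        (Finset.measurable_sum _ fun i _ => measurable_pi_apply i)
      have hXeq : ((fun v : ((i : (Finset.univ.map ⟨Sum.inl, Sum.inl_injective⟩ :
            Finset (Fin m ⊕ Fin m))) → ℝ) => ∑ i, v i) ∘
            (fun a (i : (Finset.univ.map ⟨Sum.inl, Sum.inl_injective⟩ :
            Finset (Fin m ⊕ Fin m))) => Sum.elim A B (↑i) a)) = X := by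
        funext a
        show (∑ i ∈ (Finset.univ.map ⟨Sum.inl, Sum.inl_injective⟩ :
          Finset (Fin m ⊕ Fin m)).attach, Sum.elim A B (↑i) a) = X a
        rw [Finset.sum_attach _ (fun k => Sum.elim A B k a), Finset.sum_map]
        rfl
      have hYeq : ((fun v : ((i : (Finset.univ.map ⟨Sum.inr, Sum.inr_injective⟩ :
            Finset (Fin m ⊕ Fin m))) → ℝ) => ∑ i, v i) ∘
            (fun a (i : (Finset.univ.map ⟨Sum.inr, Sum.inr_injective⟩ :
            Finset (Fin m ⊕ Fin m))) => Sum.elim A B (↑i) a)) = Y := by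
        funext a
        show (∑ i ∈ (Finset.univ.map ⟨Sum.inr, Sum.inr_injective⟩ :
          Finset (Fin m ⊕ Fin m)).attach, Sum.elim A B (↑i) a) = Y a
        rw [Finset.sum_attach _ (fun k => Sum.elim A B k a), Finset.sum_map]
        rfl
      rwa [hXeq, hYeq] at h2
    -- collision probability
    have hDmeas : ∀ k : ℕ, MeasurableSet (X ⁻¹' {(k:ℝ)} ∩ Y ⁻¹' {(k:ℝ)}) := fun k =>
      (hXmeas (measurableSet_singleton _)).inter (hYmeas (measurableSet_singleton _))
    have hdisj : (↑J : Set ℕ).PairwiseDisjoint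
        (fun k : ℕ => X ⁻¹' {(k:ℝ)} ∩ Y ⁻¹' {(k:ℝ)}) := by
      intro k _ l _ hkl
      refine Set.disjoint_left.2 ?_
      rintro ω ⟨hk, _⟩ ⟨hl, _⟩
      simp only [Set.mem_preimage, Set.mem_singleton_iff] at hk hl
      exact hkl (Nat.cast_injective (hk ▸ hl : (k:ℝ) = (l:ℝ)).symm ▸ rfl)
    have hcollision : ∑ k ∈ J, μ (X ⁻¹' {(k:ℝ)}) * μ (X ⁻¹' {(k:ℝ)})
        ≤ μ {ω | X ω = Y ω} := by
      have hprod : ∀ k ∈ J, μ (X ⁻¹' {(k:ℝ)} ∩ Y ⁻¹' {(k:ℝ)})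
          = μ (X ⁻¹' {(k:ℝ)}) * μ (X ⁻¹' {(k:ℝ)}) := fun k _ => by
        rw [hXYindep.measure_inter_preimage_eq_mul _ _ (measurableSet_singleton _)
          (measurableSet_singleton _), hXYk]
      calc ∑ k ∈ J, μ (X ⁻¹' {(k:ℝ)}) * μ (X ⁻¹' {(k:ℝ)})
          = ∑ k ∈ J, μ (X ⁻¹' {(k:ℝ)} ∩ Y ⁻¹' {(k:ℝ)}) :=
        (Finset.sum_congr rfl hprod).symm
      _ = μ (⋃ k ∈ J, X ⁻¹' {(k:ℝ)} ∩ Y ⁻¹' {(k:ℝ)}) :=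
        (measure_biUnion_finset hdisj fun k _ => hDmeas k).symm
      _ ≤ μ {ω | X ω = Y ω} := by
        refine measure_mono ?_
        intro ω hω
        rcases Set.mem_iUnion₂.1 hω with ⟨k, _, hk1, hk2⟩
        simp only [Set.mem_preimage, Set.mem_singleton_iff] at hk1 hk2
        show X ω = Y ω
        rw [hk1, hk2]
    -- cardinality bound
    have hcard : (J.card : ℝ) ≤ 2 * s + 1 := by
      have hsub2 : ∀ k ∈ J, ((k : ℤ)) ∈ Finset.Icc ⌈c - s⌉ ⌊c + s⌋ := by
        intro k hk
        have h := (Finset.mem_filter.1 hk).2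
        rw [abs_lt] at h
        rw [Finset.mem_Icc]
        constructor
        · exact Int.ceil_le.2 (by push_cast; linarith [h.1])
        · exact Int.le_floor.2 (by push_cast; linarith [h.2])
      have hinj : Set.InjOn (fun k : ℕ => (k:ℤ)) ↑J :=
        fun a _ b _ h => Nat.cast_injective h
      have h1 := Finset.card_le_card_of_injOn _ hsub2 hinj
      rw [Int.card_Icc] at h1
      have h2 : (((⌊c + s⌋ + 1 - ⌈c - s⌉).toNat : ℤ) : ℝ) ≤ 2 * s + 1 := by
        rcases le_or_gt (⌊c + s⌋ + 1 - ⌈c - s⌉) 0 with h | h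
        · rw [Int.toNat_of_nonpos h]; norm_num; positivity
        · rw [Int.toNat_of_nonneg h.le]
          push_cast
          have hfl := Int.floor_le (c + s)
          have hcl := Int.le_ceil (c - s)
          linarith
      calc (J.card : ℝ) ≤ (((⌊c + s⌋ + 1 - ⌈c - s⌉).toNat : ℤ) : ℝ) := by exact_mod_cast h1
      _ ≤ 2 * s + 1 := h2
    -- pass to real numbers
    set a : ℕ → ℝ := fun k => (μ (X ⁻¹' {(k:ℝ)})).toReal with ha
    have hann : ∀ k, 0 ≤ a k := fun k => ENNReal.toReal_nonneg
    have hsum23 : 2/3 ≤ ∑ k ∈ J, a k := by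
      calc (2:ℝ)/3 = (ENNReal.ofReal (2/3)).toReal := by
            rw [ENNReal.toReal_ofReal]; norm_num
      _ ≤ (∑ k ∈ J, μ (X ⁻¹' {(k:ℝ)})).toReal := by
        refine ENNReal.toReal_mono ?_ hchain
        exact (ENNReal.sum_lt_top.2 fun k _ => measure_lt_top μ _).ne
      _ = ∑ k ∈ J, a k := ENNReal.toReal_sum fun k _ => measure_ne_top μ _
    have hsumsq : ∑ k ∈ J, a k * a k ≤ (μ {ω | X ω = Y ω}).toReal := by
      calc ∑ k ∈ J, a k * a k
          = (∑ k ∈ J, μ (X ⁻¹' {(k:ℝ)}) * μ (X ⁻¹' {(k:ℝ)})).toReal := by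
            rw [ENNReal.toReal_sum fun k _ =>
              ENNReal.mul_ne_top (measure_ne_top μ _) (measure_ne_top μ _)]
            exact Finset.sum_congr rfl fun k _ => (ENNReal.toReal_mul).symm
      _ ≤ (μ {ω | X ω = Y ω}).toReal :=
        ENNReal.toReal_mono (measure_ne_top μ _) hcollision
    have hJpos : 0 < (J.card : ℝ) := by
      rcases J.eq_empty_or_nonempty with h | h
      · rw [h] at hsum23; simp at hsum23; linarith
      · exact_mod_cast Finset.card_pos.2 h
    have hCS : (∑ k ∈ J, a k)^2 ≤ (J.card : ℝ) * ∑ k ∈ J, (a k)^2 :=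
      sq_sum_le_card_mul_sum_sq
    set t : ℝ := (μ {ω | X ω = Y ω}).toReal with hT
    have htnn : 0 ≤ t := ENNReal.toReal_nonneg
    have ht : 4 / (9 * (2 * s + 1)) ≤ t := by
      have h49 : (4:ℝ)/9 ≤ (J.card : ℝ) * t := by
        calc (4:ℝ)/9 = (2/3)^2 := by norm_num
        _ ≤ (∑ k ∈ J, a k)^2 := pow_le_pow_left₀ (by norm_num) hsum23 2
        _ ≤ (J.card : ℝ) * ∑ k ∈ J, (a k)^2 := hCS
        _ ≤ (J.card : ℝ) * t := by
          refine mul_le_mul_of_nonneg_left ?_ hJpos.le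
          calc ∑ k ∈ J, (a k)^2 = ∑ k ∈ J, a k * a k := by
                exact Finset.sum_congr rfl fun k _ => sq (a k) ▸ (sq (a k)).symm ▸ rfl
          _ ≤ t := hsumsq
      have h2 : (4:ℝ)/9 ≤ (2 * s + 1) * t :=
        le_trans h49 (mul_le_mul_of_nonneg_right hcard htnn)
      rw [div_le_iff₀ (by positivity : (0:ℝ) < 9 * (2 * s + 1))]
      nlinarith [h2]
    calc ENNReal.ofReal (4 / (9 * (2 * s + 1)))
        ≤ ENNReal.ofReal t := ENNReal.ofReal_le_ofReal ht
    _ = μ {ω | X ω = Y ω} := ENNReal.ofReal_toReal (measure_ne_top μ _)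
end
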